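/- arXiv:1303.2305 — 5 statements merged into one kernel-verified Lean document; each statement's English description precedes it below -/
import Mathlib

section
/- For every real number q > 1 with 1/p + 1/q = 1, and for every real t, the sum over all integers j of |sinc(t - j)|^q is strictly less than p, where sinc(t) = sin(πt)/(πt) (and sinc(0) = 1). -/
open Real

noncomputable def sinc (t : ℝ) : ℝ :=
  if t = 0 then 1 else Real.sin (Real.pi * t) / (Real.pi * t)

/-!
For `q ≥ 2` the bound follows from `|sinc| ≤ 1` and the identity `∑ⱼ sinc (t - j) ^ 2 = 1`, which
is Parseval's identity for `x ↦ e^{2πitx}` on `[0, 1]`: its `j`-th Fourier coefficient has modulus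
`|sinc (t - j)|`. For `1 < q ≤ 2` we may take `t ∈ [0, 1]`; the two central terms contribute at most
`1 + (2/π)^q`, the others at most `2 π^{-q} ζ(q) ≤ 2 π^{-q} p`, and convexity of `q ↦ a^q` on `[1, 2]`
reduces `1 + (2/π)^q + 2 π^{-q} p < p` to a polynomial inequality.
-/

open Complex in
lemma norm_integral_exp_two_pi_I_mul (a : ℝ) :
    ‖∫ x in (0 : ℝ)..1, exp (2 * π * I * a * x)‖ = |_root_.sinc a| := by
  rcases eq_or_ne a 0 with rfl | ha
  · simp [_root_.sinc]
  have hc : 2 * π * I * a ≠ 0 := by simp [ha, pi_ne_zero]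
  rw [integral_exp_mul_complex hc, _root_.sinc, if_neg ha]
  have : (2 * π * I * a * (1 : ℝ) : ℂ) = I * ((2 * π * a : ℝ) : ℂ) := by push_cast; ring
  rw [this, ofReal_zero, mul_zero, Complex.exp_zero, norm_div, norm_exp_I_mul_ofReal_sub_one]
  simp [abs_div, abs_mul, abs_of_pos pi_pos]
  field_simp

open Complex MeasureTheory in
theorem hasSum_sinc_sub_int_sq (t : ℝ) : HasSum (fun j : ℤ ↦ _root_.sinc (t - j) ^ 2) 1 := by
  set f : ℝ → ℂ := fun x ↦ exp (2 * π * I * t * x)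
  have hnorm (x : ℝ) : ‖f x‖ = 1 := by simp [f, Complex.norm_exp]
  have hL2 : MemLp f 2 (volume.restrict (Set.Ioc 0 1)) :=
    .of_bound (by fun_prop : Continuous f).aestronglyMeasurable 1
      (.of_forall fun x ↦ (hnorm x).le)
  have hcoeff (j : ℤ) : ‖fourierCoeffOn zero_lt_one f j‖ = |_root_.sinc (t - j)| := by
    rw [fourierCoeffOn_eq_integral, ← norm_integral_exp_two_pi_I_mul]
    simp only [f, fourier_coe_apply, smul_eq_mul, sub_zero, div_one, one_smul, ← Complex.exp_add]
    congr 3 with x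
    congr 1
    push_cast
    ring
  simpa [hcoeff, hnorm] using hasSum_sq_fourierCoeffOn zero_lt_one hL2

lemma sinc_eq_real_sinc (t : ℝ) : _root_.sinc t = Real.sinc (π * t) := by
  simp [_root_.sinc, Real.sinc, pi_ne_zero]

lemma tsum_abs_sinc_sub_int_rpow_le_one {q : ℝ} (hq : 2 ≤ q) (t : ℝ) :
    ∑' j : ℤ, |_root_.sinc (t - j)| ^ q ≤ 1 := by
  have hsq := hasSum_sinc_sub_int_sq t
  have hle (j : ℤ) : |_root_.sinc (t - j)| ^ q ≤ _root_.sinc (t - j) ^ 2 := by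
    rw [← sq_abs, ← Real.rpow_natCast]
    exact Real.rpow_le_rpow_of_exponent_ge' (abs_nonneg _)
      (sinc_eq_real_sinc _ ▸ Real.abs_sinc_le_one _) (by norm_num) (by exact_mod_cast hq)
  rw [← hsq.tsum_eq]
  exact (hsq.summable.of_nonneg_of_le (fun _ ↦ by positivity) hle).tsum_le_tsum hle hsq.summable

lemma abs_sinc_le_inv_pi_mul_abs {x : ℝ} (hx : x ≠ 0) : |_root_.sinc x| ≤ (π * |x|)⁻¹ := by
  rw [_root_.sinc, if_neg hx, abs_div, abs_mul, abs_of_pos pi_pos, ← one_div]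
  gcongr
  exact abs_sin_le_one _

lemma abs_sinc_rpow_le {q a x : ℝ} (hq : 0 ≤ q) (ha : 0 < a) (hax : a ≤ |x|) :
    |_root_.sinc x| ^ q ≤ π ^ (-q) * a ^ (-q) := by
  have hx : x ≠ 0 := abs_pos.1 (ha.trans_le hax)
  rw [← Real.mul_rpow pi_pos.le ha.le, Real.rpow_neg (by positivity),
    ← Real.inv_rpow (by positivity)]
  gcongr
  exact (abs_sinc_le_inv_pi_mul_abs hx).trans (by gcongr)

lemma abs_sinc_rpow_add_abs_sinc_sub_one_rpow_le {q s : ℝ} (hq : 0 ≤ q) (hs₀ : 0 ≤ s)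
    (hs₁ : s ≤ 1) : |_root_.sinc s| ^ q + |_root_.sinc (s - 1)| ^ q ≤ 1 + (2 / π) ^ q := by
  have hone (x : ℝ) : |_root_.sinc x| ^ q ≤ 1 :=
    Real.rpow_le_one (abs_nonneg _) (sinc_eq_real_sinc x ▸ Real.abs_sinc_le_one _) hq
  have hhalf {x : ℝ} (hx : 1 / 2 ≤ |x|) : |_root_.sinc x| ^ q ≤ (2 / π) ^ q := by
    refine (abs_sinc_rpow_le hq one_half_pos hx).trans_eq ?_
    rw [← Real.mul_rpow pi_pos.le one_half_pos.le, Real.rpow_neg (by positivity),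
      ← Real.inv_rpow (by positivity)]
    congr 1
    field_simp
  rcases le_total s (1 / 2) with hs | hs
  · linarith [hone s, hhalf (x := s - 1) (by rw [abs_of_nonpos (by linarith)]; linarith)]
  · linarith [hone (s - 1), hhalf (x := s) (by rw [abs_of_nonneg hs₀]; linarith)]

lemma summable_nat_add_one_rpow_neg {q : ℝ} (hq : 1 < q) :
    Summable fun n : ℕ ↦ ((n : ℝ) + 1) ^ (-q) := by
  simpa using (summable_nat_add_iff 1).2 (Real.summable_nat_rpow.2 (neg_lt_neg hq))

open MeasureTheory in
lemma tsum_nat_add_one_rpow_neg_le {q : ℝ} (hq : 1 < q) :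
    ∑' n : ℕ, ((n : ℝ) + 1) ^ (-q) ≤ q / (q - 1) := by
  have htail : ∑' n : ℕ, ((n + 1 + 1 : ℕ) : ℝ) ^ (-q) ≤ ∫ x in Set.Ioi ((1 : ℕ) : ℝ), x ^ (-q) :=
    AntitoneOn.tsum_comp_add_le_integral 1
      (fun x hx y _ hxy ↦ Real.rpow_le_rpow_of_nonpos (by simp at hx; linarith) hxy (by linarith))
      (by simpa using integrableOn_Ioi_rpow_of_lt (by linarith) zero_lt_one)
      (fun x hx ↦ Real.rpow_nonneg (by simp at hx; linarith) _)
  rw [Nat.cast_one, integral_Ioi_rpow_of_lt (by linarith) zero_lt_one] at htail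
  have hq1 : q - 1 ≠ 0 := by linarith
  calc _ = 1 + ∑' n : ℕ, ((n + 1 + 1 : ℕ) : ℝ) ^ (-q) := by
        rw [(summable_nat_add_one_rpow_neg hq).tsum_eq_zero_add]; push_cast; simp
    _ ≤ 1 + 1 / (q - 1) := by
        have hI : -(1 : ℝ) ^ (-q + 1) / (-q + 1) = 1 / (q - 1) := by
          rw [Real.one_rpow, neg_add_eq_sub, ← neg_sub, div_neg]; ring
        linarith
    _ = q / (q - 1) := by field_simp; ring

lemma tsum_abs_sinc_sub_int_rpow_le_of_mem_Icc {q s : ℝ} (hq : 1 < q) (hs : s ∈ Set.Icc 0 1) :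
    ∑' j : ℤ, |_root_.sinc (s - j)| ^ q ≤ 1 + (2 / π) ^ q + 2 * (π ^ (-q) * (q / (q - 1))) := by
  set f : ℤ → ℝ := fun j ↦ |_root_.sinc (s - j)| ^ q
  set C : ℕ → ℝ := fun n ↦ π ^ (-q) * ((n : ℝ) + 1) ^ (-q)
  have hf (j : ℤ) : 0 ≤ f j := by positivity
  have hC : Summable C := (summable_nat_add_one_rpow_neg hq).mul_left _
  have hCsum : ∑' n, C n ≤ π ^ (-q) * (q / (q - 1)) := by
    rw [tsum_mul_left]
    exact mul_le_mul_of_nonneg_left (tsum_nat_add_one_rpow_neg_le hq) (by positivity)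
  have hpos (n : ℕ) : f (n + 2 : ℕ) ≤ C n :=
    abs_sinc_rpow_le (by linarith) (by positivity)
      (by rw [abs_of_nonpos (by push_cast; linarith [hs.2])]; push_cast; linarith [hs.2])
  have hneg (n : ℕ) : f (-(n + 1)) ≤ C n :=
    abs_sinc_rpow_le (by linarith) (by positivity)
      (by rw [abs_of_nonneg (by push_cast; linarith [hs.1])]; push_cast; linarith [hs.1])
  have hfpos : Summable fun n : ℕ ↦ f n :=
    (summable_nat_add_iff 2).1 (hC.of_nonneg_of_le (fun n ↦ hf _) hpos)
  have hfneg : Summable fun n : ℕ ↦ f (-(n + 1)) := hC.of_nonneg_of_le (fun n ↦ hf _) hneg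
  have hcentral : f (0 : ℕ) + f (1 : ℕ) ≤ 1 + (2 / π) ^ q := by
    simpa [f] using abs_sinc_rpow_add_abs_sinc_sub_one_rpow_le (q := q) (by linarith) hs.1 hs.2
  have hright : ∑' n : ℕ, f (n + 2 : ℕ) ≤ ∑' n, C n :=
    ((summable_nat_add_iff 2).2 hfpos).tsum_le_tsum hpos hC
  have hleft : ∑' n : ℕ, f (-(n + 1)) ≤ ∑' n, C n := hfneg.tsum_le_tsum hneg hC
  rw [tsum_of_nat_of_neg_add_one hfpos hfneg, ← hfpos.sum_add_tsum_nat_add 2]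
  simp only [Finset.sum_range_succ, Finset.sum_range_zero]
  linarith

lemma tsum_abs_sinc_sub_int_rpow_le {q : ℝ} (hq : 1 < q) (t : ℝ) :
    ∑' j : ℤ, |_root_.sinc (t - j)| ^ q ≤ 1 + (2 / π) ^ q + 2 * (π ^ (-q) * (q / (q - 1))) := by
  have hshift (j : ℤ) : t - ((j + ⌊t⌋ : ℤ) : ℝ) = Int.fract t - j := by
    rw [Int.fract]; push_cast; ring
  rw [← (Equiv.addRight ⌊t⌋).tsum_eq]
  simp only [Equiv.coe_addRight, hshift]
  exact tsum_abs_sinc_sub_int_rpow_le_of_mem_Icc hq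
    ⟨Int.fract_nonneg t, (Int.fract_lt_one t).le⟩

lemma rpow_le_two_sub_mul_add_sub_one_mul_sq {x q : ℝ} (hx : 0 ≤ x) (hq₁ : 1 ≤ q) (hq₂ : q ≤ 2) :
    x ^ q ≤ (2 - q) * x + (q - 1) * x ^ 2 := by
  have hpow : x ^ (2 - q) * (x ^ 2) ^ (q - 1) = x ^ q := by
    rw [← Real.rpow_natCast, ← Real.rpow_mul hx, ← Real.rpow_add' hx (by push_cast; linarith)]
    push_cast
    ring_nf
  rw [← hpow]
  exact Real.geom_mean_le_arith_mean2_weighted (by linarith) (by linarith) hx (by positivity)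
    (by ring)

lemma one_add_two_div_pi_rpow_add_lt {q : ℝ} (hq₁ : 1 < q) (hq₂ : q ≤ 2) :
    1 + (2 / π) ^ q + 2 * (π ^ (-q) * (q / (q - 1))) < q / (q - 1) := by
  set d := 1 / π with hd
  have hd₀ : 0 < d := by positivity
  have hd₁ : d < 0.3185 := by
    rw [hd, div_lt_iff₀ pi_pos]; linarith [pi_gt_d2]
  have hx₀ : 0 < q - 1 := by linarith
  have hx₁ : 0 ≤ 2 - q := by linarith
  have key : (q - 1) * (2 * d) ^ q + 2 * q * d ^ q < 1 := calc
    (q - 1) * (2 * d) ^ q + 2 * q * d ^ q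
      ≤ (q - 1) * ((2 - q) * (2 * d) + (q - 1) * (2 * d) ^ 2)
        + 2 * q * ((2 - q) * d + (q - 1) * d ^ 2) := by
      gcongr
      · exact rpow_le_two_sub_mul_add_sub_one_mul_sq (by positivity) hq₁.le hq₂
      · exact rpow_le_two_sub_mul_add_sub_one_mul_sq hd₀.le hq₁.le hq₂
    _ ≤ (q - 1) * ((2 - q) * (2 * 0.3185) + (q - 1) * (2 * 0.3185) ^ 2)
        + 2 * q * ((2 - q) * 0.3185 + (q - 1) * 0.3185 ^ 2) := by gcongr
    _ < 1 := by nlinarith [sq_nonneg (q - 1.6)]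
  rw [show 2 / π = 2 * d by ring, Real.rpow_neg pi_pos.le, ← Real.inv_rpow pi_pos.le,
    ← one_div, ← sub_pos]
  field_simp
  nlinarith

theorem stmt0 (p q : ℝ) (hq : 1 < q) (hpq : 1 / p + 1 / q = 1) (t : ℝ) :
    ∑' j : ℤ, |_root_.sinc (t - (j : ℝ))| ^ q < p := by
  have hqp : q.HolderConjugate p :=
    holderConjugate_iff.2 ⟨hq, by simpa [one_div, add_comm] using hpq⟩
  rcases le_or_gt q 2 with hq₂ | hq₂
  · rw [hqp.conjugate_eq]
    exact (tsum_abs_sinc_sub_int_rpow_le hq t).trans_lt (one_add_two_div_pi_rpow_add_lt hq hq₂)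
  · exact (tsum_abs_sinc_sub_int_rpow_le_one hq₂.le t).trans_lt hqp.symm.lt
end

section
/- For every natural number k ≥ 1 and every real t ∈ (0,1) and every n ≥ 1, the tail sum Σ_{j ∉ J_n} 1/|t - j|^{k+1} is at most (1/n + 2/k) · n^{-k}, where J_n = {j ∈ ℤ : -n+1 ≤ j ≤ n}. -/
/-
With `f x = 1 / x ^ (k + 1)`, the terms at `j = -n - i` and `j = n + 1 + i` are
`f (n + i + t)` and `f (n + i + 1 - t)`. By convexity of `f` on `(0, ∞)` their sum is at most
`f (n + i) + f (n + i + 1)`, its value at `t = 0`. Summing over `i` gives `f n + 2 ∑_{m > n} f m`,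
and comparing with the integral, `∑_{m > n} f m ≤ ∫_n^∞ f = n⁻ᵏ / k`.
-/

theorem ConvexOn.map_add_map_le {s : Set ℝ} {f : ℝ → ℝ} (hf : ConvexOn ℝ s f) {x y : ℝ}
    (hx : x ∈ s) (hy : y ∈ s) {t : ℝ} (ht₀ : 0 ≤ t) (ht₁ : t ≤ 1) :
    f ((1 - t) * x + t * y) + f (t * x + (1 - t) * y) ≤ f x + f y := by
  have h₁ := hf.2 hx hy (sub_nonneg.2 ht₁) ht₀ (by ring)
  have h₂ := hf.2 hx hy ht₀ (sub_nonneg.2 ht₁) (by ring)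
  simp only [smul_eq_mul] at h₁ h₂
  linarith

theorem one_div_pow_add_one_div_pow_le (k : ℕ) {m t : ℝ} (hm : 0 < m) (ht₀ : 0 ≤ t)
    (ht₁ : t ≤ 1) : 1 / (m + t) ^ k + 1 / (m + 1 - t) ^ k ≤ 1 / m ^ k + 1 / (m + 1) ^ k := by
  have hf : ConvexOn ℝ (Set.Ioi 0) fun x : ℝ => 1 / x ^ k := by
    simpa only [zpow_neg, zpow_natCast, one_div] using convexOn_zpow (𝕜 := ℝ) (-k)
  convert hf.map_add_map_le hm (show 0 < m + 1 by linarith) ht₀ ht₁ using 3 <;> ring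

theorem summable_one_div_nat_add_pow {c : ℝ} (hc : 0 ≤ c) {p : ℕ} (hp : 1 < p) :
    Summable fun i : ℕ => 1 / (i + c) ^ p :=
  ((Real.summable_one_div_nat_add_rpow c p).2 (mod_cast hp)).congr fun i => by
    rw [Real.rpow_natCast, abs_of_nonneg (by positivity)]

theorem tsum_one_div_add_succ_pow_le {k : ℕ} (hk : k ≠ 0) {a : ℝ} (ha : 0 < a) :
    ∑' i : ℕ, 1 / (a + ↑(i + 1)) ^ (k + 1) ≤ 1 / (k * a ^ k) := by
  have hzpow : ∀ x : ℝ, 1 / x ^ (k + 1) = x ^ (-(k + 1 : ℤ)) := fun x => by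
    rw [zpow_neg, one_div]; norm_cast
  refine Real.tsum_le_of_sum_range_le (fun i => ?_) fun N => ?_
  · positivity
  have hanti : AntitoneOn (fun x : ℝ => 1 / x ^ (k + 1)) (Set.Icc a (a + N)) :=
    fun x hx y _ hxy => one_div_le_one_div_of_le (pow_pos (ha.trans_le hx.1) _)
      (pow_le_pow_left₀ (ha.trans_le hx.1).le hxy _)
  have hnot : (0 : ℝ) ∉ Set.uIcc a (a + N) := by
    rw [Set.uIcc_of_le (by linarith [N.cast_nonneg (α := ℝ)])]
    exact fun h => ha.not_ge h.1
  calc ∑ i ∈ Finset.range N, 1 / (a + ↑(i + 1)) ^ (k + 1)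
      ≤ ∫ x in a..a + N, 1 / x ^ (k + 1) := hanti.sum_le_integral
    _ = 1 / (k * a ^ k) - 1 / (k * (a + N) ^ k) := by
      simp only [hzpow]
      rw [integral_zpow (Or.inr ⟨by omega, hnot⟩)]
      push_cast
      rw [show -((k : ℝ) + 1) + 1 = -k by ring, show -((k : ℤ) + 1) + 1 = -k by ring,
        zpow_neg, zpow_neg, zpow_natCast, zpow_natCast]
      field_simp
      ring
    _ ≤ 1 / (k * a ^ k) := sub_le_self _ (by positivity)

theorem tsum_one_div_pow_add_tsum_one_div_pow_le {k : ℕ} (hk : k ≠ 0) {a t : ℝ} (ha : 0 < a)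
    (ht₀ : 0 ≤ t) (ht₁ : t ≤ 1) :
    ∑' i : ℕ, 1 / (i + a + t) ^ (k + 1) + ∑' i : ℕ, 1 / (i + a + 1 - t) ^ (k + 1)
      ≤ 1 / a ^ (k + 1) + 2 / (k * a ^ k) := by
  have hp : 1 < k + 1 := by omega
  have hs₁ : Summable fun i : ℕ => 1 / (i + a + t) ^ (k + 1) := by
    simpa only [add_assoc] using summable_one_div_nat_add_pow (by positivity : 0 ≤ a + t) hp
  have hs₂ : Summable fun i : ℕ => 1 / (i + a + 1 - t) ^ (k + 1) := by
    simpa only [add_assoc, add_sub_assoc] using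
      summable_one_div_nat_add_pow (by linarith : 0 ≤ a + (1 - t)) hp
  have hs₃ : Summable fun i : ℕ => 1 / (i + a) ^ (k + 1) :=
    summable_one_div_nat_add_pow ha.le hp
  have hs₄ : Summable fun i : ℕ => 1 / (i + a + 1) ^ (k + 1) := by
    simpa only [add_assoc] using summable_one_div_nat_add_pow (by positivity : 0 ≤ a + 1) hp
  calc _ = ∑' i : ℕ, (1 / (i + a + t) ^ (k + 1) + 1 / (i + a + 1 - t) ^ (k + 1)) :=
        (hs₁.tsum_add hs₂).symm
    _ ≤ ∑' i : ℕ, (1 / (i + a) ^ (k + 1) + 1 / (i + a + 1) ^ (k + 1)) :=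
        (hs₁.add hs₂).tsum_le_tsum (fun i => one_div_pow_add_one_div_pow_le _ (by positivity)
          ht₀ ht₁) (hs₃.add hs₄)
    _ = 1 / a ^ (k + 1) + 2 * ∑' i : ℕ, 1 / (a + ↑(i + 1)) ^ (k + 1) := by
        have h₁ (i : ℕ) : ((i + 1 : ℕ) : ℝ) + a = a + (i + 1 : ℕ) := add_comm _ _
        have h₂ (i : ℕ) : (i : ℝ) + a + 1 = a + (i + 1 : ℕ) := by push_cast; ring
        rw [hs₃.tsum_add hs₄, hs₃.tsum_eq_zero_add]
        simp only [Nat.cast_zero, zero_add, h₁, h₂]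
        ring
    _ ≤ 1 / a ^ (k + 1) + 2 / (k * a ^ k) := by
        rw [← mul_one_div (2 : ℝ) (k * a ^ k)]
        gcongr
        exact tsum_one_div_add_succ_pow_le hk ha

def tailIndexEquiv (n : ℕ) : ℕ ⊕ ℕ ≃ {j : ℤ // j < -(n : ℤ) + 1 ∨ (n : ℤ) < j} where
  toFun := Sum.elim (fun i => ⟨-(n : ℤ) - i, by omega⟩) (fun i => ⟨(n : ℤ) + 1 + i, by omega⟩)
  invFun j := if (n : ℤ) < j.1 then .inr (j.1 - n - 1).toNat else .inl (-(n : ℤ) - j.1).toNat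
  left_inv := by
    rintro (i | i)
    · dsimp only [Sum.elim_inl]
      rw [if_neg (by omega)]
      congr 1
      omega
    · dsimp only [Sum.elim_inr]
      rw [if_pos (by omega)]
      congr 1
      omega
  right_inv := by
    rintro ⟨j, hj⟩
    by_cases h : (n : ℤ) < j
    · simp only [h, ↓reduceIte, Sum.elim_inr, Subtype.mk.injEq]
      omega
    · simp only [h, ↓reduceIte, Sum.elim_inl, Subtype.mk.injEq]
      omega

theorem tsum_tail_eq {n : ℕ} {g : ℤ → ℝ} (hl : Summable fun i : ℕ => g (-n - i))
    (hr : Summable fun i : ℕ => g (n + 1 + i)) :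
    ∑' j : {j : ℤ // j < -(n : ℤ) + 1 ∨ (n : ℤ) < j}, g j
      = ∑' i : ℕ, g (-n - i) + ∑' i : ℕ, g (n + 1 + i) := by
  rw [← (tailIndexEquiv n).tsum_eq]
  exact Summable.tsum_sum (f := fun p => g (tailIndexEquiv n p)) hl hr

theorem stmt4 (k n : ℕ) (hk : 1 ≤ k) (hn : 1 ≤ n) (t : ℝ) (ht : t ∈ Set.Ioo (0 : ℝ) 1) :
    ∑' j : {j : ℤ // j < -(n : ℤ) + 1 ∨ (n : ℤ) < j}, 1 / |t - ((j : ℤ) : ℝ)| ^ (k + 1)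
      ≤ (1 / n + 2 / k) * ((n : ℝ) ^ k)⁻¹ := by
  obtain ⟨ht₀, ht₁⟩ := ht
  have hn₀ : (0 : ℝ) < n := by exact_mod_cast hn
  have hl (i : ℕ) : 1 / |t - ((-n - i : ℤ) : ℝ)| ^ (k + 1) = 1 / (i + n + t) ^ (k + 1) := by
    push_cast
    rw [abs_of_pos (by linarith [i.cast_nonneg (α := ℝ)])]
    ring_nf
  have hr (i : ℕ) :
      1 / |t - ((n + 1 + i : ℤ) : ℝ)| ^ (k + 1) = 1 / (i + n + 1 - t) ^ (k + 1) := by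
    push_cast
    rw [abs_sub_comm, abs_of_pos (by linarith)]
    ring_nf
  have hp : 1 < k + 1 := by omega
  have hsl : Summable fun i : ℕ => 1 / |t - ((-n - i : ℤ) : ℝ)| ^ (k + 1) := by
    refine (summable_one_div_nat_add_pow (c := n + t) (by positivity) hp).congr fun i => ?_
    rw [hl]; ring
  have hsr : Summable fun i : ℕ => 1 / |t - ((n + 1 + i : ℤ) : ℝ)| ^ (k + 1) := by
    refine (summable_one_div_nat_add_pow (c := n + (1 - t)) (by linarith) hp).congr fun i => ?_
    rw [hr]; ring
  rw [tsum_tail_eq (g := fun j : ℤ => 1 / |t - (j : ℝ)| ^ (k + 1)) hsl hsr]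
  simp only [hl, hr]
  calc _ ≤ 1 / (n : ℝ) ^ (k + 1) + 2 / (k * n ^ k) :=
        tsum_one_div_pow_add_tsum_one_div_pow_le (by omega) hn₀ ht₀.le ht₁.le
    _ = (1 / n + 2 / k) * ((n : ℝ) ^ k)⁻¹ := by
        field_simp
        ring
end

section
/- For all natural numbers k ≥ 1, k! ≤ (11√(2π)/10) · (k/e)^k · √k. -/
/-!
The Stirling sequence `n! / (√(2n) (n/e)^n)` is decreasing on the positive integers, so it is
bounded by its first value `e / √2`; this gives `n! ≤ e (n/e)^n √n`. Numerically
`e < 2.7183 < 1.1 √(2π) ≈ 2.757`.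
-/

open Real Nat

namespace Stirling

theorem stirlingSeq_le_exp_one_div_sqrt_two {n : ℕ} (hn : n ≠ 0) :
    stirlingSeq n ≤ exp 1 / √2 := by
  obtain ⟨m, rfl⟩ := exists_eq_succ_of_ne_zero hn
  simpa using stirlingSeq'_antitone (Nat.zero_le m)

theorem factorial_le_exp_one_mul_stirling {n : ℕ} (hn : n ≠ 0) :
    (n ! : ℝ) ≤ exp 1 * (n / exp 1) ^ n * √n := by
  have hsplit : exp 1 * (n / exp 1) ^ n * √n = exp 1 / √2 * (√(2 * n) * (n / exp 1) ^ n) := by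
    rw [sqrt_mul zero_le_two]
    field_simp
  rw [hsplit, ← div_le_iff₀ (by positivity)]
  exact stirlingSeq_le_exp_one_div_sqrt_two hn

end Stirling

theorem Real.exp_one_le_eleven_div_ten_mul_sqrt_two_pi : exp 1 ≤ 11 * √(2 * π) / 10 := by
  have hsqrt : (27183 / 11000 : ℝ) ≤ √(2 * π) := le_sqrt_of_sq_le (by linarith [pi_gt_d2])
  linarith [exp_one_lt_d9]

theorem stmt5 (k : ℕ) (hk : 1 ≤ k) :
    (Nat.factorial k : ℝ) ≤
      (11 * Real.sqrt (2 * Real.pi) / 10) * ((k : ℝ) / Real.exp 1) ^ k * Real.sqrt k := by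
  calc (k ! : ℝ) ≤ exp 1 * (k / exp 1) ^ k * √k :=
        Stirling.factorial_le_exp_one_mul_stirling (Nat.one_le_iff_ne_zero.mp hk)
    _ ≤ 11 * √(2 * π) / 10 * (k / exp 1) ^ k * √k := by
        gcongr
        exact exp_one_le_eleven_div_ten_mul_sqrt_two_pi
end

section
/- For every k ∈ ℕ, k ≥ 1, and 0 < b, the infimum of (1/√(2π)) ‖φ^{(k)}‖_{L¹([-b,b])} over all φ ∈ C^k compactly supported in [-b,b] with φ̂(0) = 1 satisfies: it is bounded below by 2^{k-1} k! / b^k (lower bound direction). -/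
open MeasureTheory

noncomputable def fourierTr (f : ℝ → ℂ) (ξ : ℝ) : ℂ :=
  (1 / Real.sqrt (2 * Real.pi)) * ∫ t : ℝ, f t * Complex.exp (-(Complex.I * t * ξ))

/-!
Pair `φ⁽ᵏ⁾` with `Q x = T_k (x / b)`, `T_k` the Chebyshev polynomial. Since `φ` is supported in
`[-b, b]`, integrating by parts `k` times leaves no boundary terms and gives
`∫ φ⁽ᵏ⁾ Q = (-1)ᵏ Q⁽ᵏ⁾ ∫ φ`, where `Q⁽ᵏ⁾ = k! 2^(k-1) / bᵏ` is the top coefficient of `Q` times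
`k!` and `∫ φ = √(2π)` is the normalisation `φ̂ 0 = 1`. As `|Q| ≤ 1` on `[-b, b]`, the norm of
`∫ φ⁽ᵏ⁾ Q` is at most `∫ ‖φ⁽ᵏ⁾‖`.
-/

open Polynomial Set Function

namespace Polynomial

theorem iterate_derivative_natDegree {R : Type*} [Semiring R] (p : R[X]) :
    derivative^[p.natDegree] p = C ((p.natDegree.factorial : R) * p.leadingCoeff) := by
  have hdeg : (derivative^[p.natDegree] p).natDegree ≤ 0 :=
    (natDegree_iterate_derivative _ _).trans (by omega)
  rw [eq_C_of_natDegree_le_zero hdeg, coeff_iterate_derivative, zero_add,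
    Nat.descFactorial_self, nsmul_eq_mul, leadingCoeff]

end Polynomial

section Endpoints

variable {E : Type*} [TopologicalSpace E] [Zero E] [T2Space E] {f : ℝ → E} {a b : ℝ}

theorem Continuous.apply_left_eq_zero_of_support_subset_Icc (hf : Continuous f)
    (hsupp : support f ⊆ Icc a b) : f a = 0 := by
  have h : EqOn f 0 (Iio a) := fun x hx ↦ notMem_support.mp fun h ↦ (hsupp h).1.not_gt hx
  exact h.closure hf continuous_const (closure_Iio a ▸ self_mem_Iic)

theorem Continuous.apply_right_eq_zero_of_support_subset_Icc (hf : Continuous f)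
    (hsupp : support f ⊆ Icc a b) : f b = 0 := by
  have h : EqOn f 0 (Ioi b) := fun x hx ↦ notMem_support.mp fun h ↦ (hsupp h).2.not_gt hx
  exact h.closure hf continuous_const (closure_Ioi b ▸ self_mem_Ici)

end Endpoints

section IntegrationByParts

variable {f : ℝ → ℂ} {a b : ℝ}

theorem support_deriv_subset_Icc (hsupp : support f ⊆ Icc a b) : support (deriv f) ⊆ Icc a b :=
  support_deriv_subset.trans (closure_minimal hsupp isClosed_Icc)

theorem intervalIntegral.integral_deriv_mul_eq_neg_of_support_subset {g g' : ℝ → ℂ}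
    (hf : ContDiff ℝ 1 f) (hsupp : support f ⊆ Icc a b) (hg : ∀ x, HasDerivAt g (g' x) x)
    (hg' : Continuous g') :
    ∫ x in a..b, deriv f x * g x = -∫ x in a..b, f x * g' x := by
  have hf' : Continuous (deriv f) := (contDiff_one_iff_deriv.mp hf).2
  have hgc : Continuous g := continuous_iff_continuousAt.mpr fun x ↦ (hg x).continuousAt
  have hparts := intervalIntegral.integral_deriv_mul_eq_sub
    (fun x _ ↦ (hf.differentiable one_ne_zero x).hasDerivAt) (fun x _ ↦ hg x)
    (hf'.intervalIntegrable a b) (hg'.intervalIntegrable a b)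
  rw [intervalIntegral.integral_add (f := fun x ↦ deriv f x * g x) (g := fun x ↦ f x * g' x)
      ((hf'.mul hgc).intervalIntegrable a b) ((hf.continuous.mul hg').intervalIntegrable a b),
    hf.continuous.apply_left_eq_zero_of_support_subset_Icc hsupp,
    hf.continuous.apply_right_eq_zero_of_support_subset_Icc hsupp] at hparts
  linear_combination hparts

theorem intervalIntegral.integral_iteratedDeriv_mul_eval_eq {n : ℕ} (hf : ContDiff ℝ n f)
    (hsupp : support f ⊆ Icc a b) (P : ℝ[X]) :
    ∫ x in a..b, iteratedDeriv n f x * P.eval x =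
      (-1) ^ n * ∫ x in a..b, f x * (derivative^[n] P).eval x := by
  induction n generalizing f with
  | zero => simp
  | succ n ih =>
    have hf' := contDiff_succ_iff_deriv.mp (by exact_mod_cast hf : ContDiff ℝ (n + 1) f)
    rw [iteratedDeriv_succ', ih hf'.2.2 (support_deriv_subset_Icc hsupp),
      intervalIntegral.integral_deriv_mul_eq_neg_of_support_subset
        (hf.of_le (by exact_mod_cast n.succ_pos)) hsupp
        (fun x ↦ ((derivative^[n] P).hasDerivAt x).ofReal_comp)
        (Complex.continuous_ofReal.comp (derivative^[n] P).derivative.continuous),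
      iterate_succ_apply' derivative]
    ring

end IntegrationByParts

noncomputable def rescaledChebyshevT (n : ℕ) (b : ℝ) : ℝ[X] :=
  (Chebyshev.T ℝ n).comp (C b⁻¹ * X)

theorem abs_eval_rescaledChebyshevT_le_one (n : ℕ) {b x : ℝ} (hb : 0 < b)
    (hx : x ∈ Icc (-b) b) : |(rescaledChebyshevT n b).eval x| ≤ 1 := by
  rw [rescaledChebyshevT, eval_comp]
  refine Chebyshev.abs_eval_T_real_le_one n ?_
  simpa [abs_mul, abs_of_pos hb, inv_mul_le_iff₀ hb] using abs_le.mpr hx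

theorem iterate_derivative_rescaledChebyshevT (n : ℕ) {b : ℝ} (hb : b ≠ 0) :
    derivative^[n] (rescaledChebyshevT n b) = C (n.factorial * 2 ^ (n - 1) / b ^ n) := by
  have hlin : (C b⁻¹ * X).natDegree = 1 := natDegree_C_mul_X _ (inv_ne_zero hb)
  have hdeg : (rescaledChebyshevT n b).natDegree = n := by
    simp [rescaledChebyshevT, natDegree_comp, hlin]
  have hlead : (rescaledChebyshevT n b).leadingCoeff = 2 ^ (n - 1) * b⁻¹ ^ n := by
    simp [rescaledChebyshevT, leadingCoeff_comp (hlin ▸ one_ne_zero)]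
  have htop := iterate_derivative_natDegree (rescaledChebyshevT n b)
  rw [hdeg, hlead] at htop
  rw [htop, inv_pow, ← div_eq_mul_inv, mul_div_assoc]

theorem intervalIntegral.norm_integral_mul_eval_le {g : ℝ → ℂ} {P : ℝ[X]} {a b : ℝ}
    (hab : a ≤ b) (hg : Continuous g) (hP : ∀ x ∈ Icc a b, |P.eval x| ≤ 1) :
    ‖∫ x in a..b, g x * P.eval x‖ ≤ ∫ x in Icc a b, ‖g x‖ := by
  rw [integral_Icc_eq_integral_Ioc, ← intervalIntegral.integral_of_le hab]
  refine (intervalIntegral.norm_integral_le_integral_norm hab).trans <|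
    intervalIntegral.integral_mono_on hab
      ((hg.mul (Complex.continuous_ofReal.comp P.continuous)).norm.intervalIntegrable a b)
      (hg.norm.intervalIntegrable a b) fun x hx ↦ ?_
  rw [norm_mul, Complex.norm_real, Real.norm_eq_abs]
  exact mul_le_of_le_one_right (norm_nonneg _) (hP x hx)

theorem integral_eq_sqrt_of_fourierTr_zero_eq_one {f : ℝ → ℂ} (h : fourierTr f 0 = 1) :
    ∫ t, f t = Real.sqrt (2 * Real.pi) := by
  have hsqrt : (Real.sqrt (2 * Real.pi) : ℂ) ≠ 0 := by
    exact_mod_cast (Real.sqrt_pos.mpr (by positivity)).ne'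
  simp only [fourierTr, Complex.ofReal_zero, mul_zero, neg_zero, Complex.exp_zero, mul_one] at h
  rwa [one_div, inv_mul_eq_one₀ hsqrt, eq_comm] at h

theorem stmt18_general (k : ℕ) (b : ℝ) (hb : 0 < b)
    (φ : ℝ → ℂ) (hφ : ContDiff ℝ k φ)
    (hsupp : Function.support φ ⊆ Set.Icc (-b) b)
    (hnorm : fourierTr φ 0 = 1) :
    Real.sqrt (2 * Real.pi) * 2 ^ (k - 1) * (Nat.factorial k : ℝ) / b ^ k ≤
      ∫ t in Set.Icc (-b) b, ‖iteratedDeriv k φ t‖ := by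
  have hab : -b ≤ b := by linarith
  have hmass : ∫ x in -b..b, φ x = Real.sqrt (2 * Real.pi) := by
    rw [intervalIntegral.integral_of_le hab, ← integral_Icc_eq_integral_Ioc,
      setIntegral_eq_integral_of_forall_compl_eq_zero fun x hx ↦ notMem_support.mp (hx <| hsupp ·),
      integral_eq_sqrt_of_fourierTr_zero_eq_one hnorm]
  have hpair : ∫ x in -b..b, iteratedDeriv k φ x * (rescaledChebyshevT k b).eval x =
      (-1) ^ k * (Real.sqrt (2 * Real.pi) * (k.factorial * 2 ^ (k - 1) / b ^ k : ℝ)) := by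
    simp only [intervalIntegral.integral_iteratedDeriv_mul_eval_eq hφ hsupp,
      iterate_derivative_rescaledChebyshevT k hb.ne', eval_C, intervalIntegral.integral_mul_const,
      hmass]
  calc Real.sqrt (2 * Real.pi) * 2 ^ (k - 1) * (Nat.factorial k : ℝ) / b ^ k
      = ‖∫ x in -b..b, iteratedDeriv k φ x * (rescaledChebyshevT k b).eval x‖ := by
        rw [hpair, ← Complex.ofReal_mul, norm_mul, norm_pow, norm_neg, norm_one, one_pow, one_mul,
          Complex.norm_real, Real.norm_of_nonneg (by positivity)]
        ring
    _ ≤ ∫ t in Set.Icc (-b) b, ‖iteratedDeriv k φ t‖ :=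
      intervalIntegral.norm_integral_mul_eval_le hab (hφ.continuous_iteratedDeriv k le_rfl)
        fun _ hx ↦ abs_eval_rescaledChebyshevT_le_one k hb hx

theorem stmt18 (k : ℕ) (hk : 1 ≤ k) (b : ℝ) (hb : 0 < b)
    (φ : ℝ → ℂ) (hφ : ContDiff ℝ k φ)
    (hsupp : Function.support φ ⊆ Set.Icc (-b) b)
    (hnorm : fourierTr φ 0 = 1) :
    Real.sqrt (2 * Real.pi) * 2 ^ (k - 1) * (Nat.factorial k : ℝ) / b ^ k ≤
      ∫ t in Set.Icc (-b) b, ‖iteratedDeriv k φ t‖ :=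
  stmt18_general k b hb φ hφ hsupp hnorm
end

section
/- Let 0 < δ < π, n ≥ 4/(π−δ), and set k = ⌊n(π−δ)/2⌋. Then (1/π)(1/n + 2/k) · 2^{k−1} k! / ((π−δ)^k n^k) ≤ (11e/(10√π)) · (√(π−δ)/(2√n) + 2√2/√(n(π−δ))) · exp(−(π−δ)n/2). -/
/-!
Stirling's bound `k! ≤ e √k (k/e)^k` (monotonicity of `Stirling.stirlingSeq`) gives, with
`x = (π - δ) n`, `2^(k-1) k! / x^k ≤ (e √k / 2) (2k / (e x))^k`. As `k = ⌊x/2⌋`, the base is at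
most `1/e`, and `e^(-k) ≤ e · e^(-x/2)`. The prefactor is handled with `x/4 ≤ k ≤ x/2`, and the
numerical constants then reduce to `10 e ≤ 11 √(2π)`.
-/

open Real Nat

theorem factorial_le_exp_one_mul_sqrt_mul_pow {n : ℕ} (hn : n ≠ 0) :
    (n ! : ℝ) ≤ exp 1 * √n * (n / exp 1) ^ n := by
  obtain ⟨m, rfl⟩ := Nat.exists_eq_add_one_of_ne_zero hn
  have hle : Stirling.stirlingSeq (m + 1) ≤ exp 1 / √2 :=
    Stirling.stirlingSeq_one ▸ Stirling.stirlingSeq'_antitone (Nat.zero_le m)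
  rw [Stirling.stirlingSeq, div_le_div_iff₀ (by positivity) (by positivity),
    sqrt_mul zero_le_two] at hle
  exact le_of_mul_le_mul_right (hle.trans_eq (by ring)) (by positivity)

theorem two_pow_pred_mul_factorial_div_pow_le {x : ℝ} {k : ℕ} (hk : k ≠ 0)
    (hkx : 2 * k ≤ x) (hxk : x < 2 * k + 2) :
    2 ^ (k - 1) * (k ! : ℝ) / x ^ k ≤ exp 1 ^ 2 / 2 * √k * exp (-x / 2) := by
  have hk0 : (0 : ℝ) < k := by positivity
  have hx : 0 < x := by linarith
  have hratio : 2 * k / (exp 1 * x) ≤ exp (-1) := by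
    rw [exp_neg, div_le_iff₀ (by positivity)]
    field_simp
    exact hkx
  calc 2 ^ (k - 1) * (k ! : ℝ) / x ^ k
      ≤ 2 ^ (k - 1) * (exp 1 * √k * (k / exp 1) ^ k) / x ^ k := by
        gcongr 2 ^ (k - 1) * ?_ / _
        exact factorial_le_exp_one_mul_sqrt_mul_pow hk
    _ = exp 1 * √k / 2 * (2 * k / (exp 1 * x)) ^ k := by
        obtain ⟨j, rfl⟩ := Nat.exists_eq_add_one_of_ne_zero hk
        rw [Nat.add_sub_cancel]
        simp only [div_pow, mul_pow]
        field_simp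
        ring
    _ ≤ exp 1 * √k / 2 * exp (-1) ^ k := by gcongr
    _ ≤ exp 1 * √k / 2 * (exp 1 * exp (-x / 2)) := by
        rw [← exp_nat_mul, ← exp_add]
        gcongr
        linarith
    _ = exp 1 ^ 2 / 2 * √k * exp (-x / 2) := by ring

theorem sqrt_div_add_two_div_sqrt_le {n c k : ℝ} (hn : 0 < n) (hc : 0 < c)
    (hk : n * c / 4 ≤ k) (hk' : k ≤ n * c / 2) :
    √k / n + 2 / √k ≤ √2 * (√c / (2 * √n) + 2 * √2 / √(n * c)) := by
  have hupper : √k ≤ √(n * c) / √2 := by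
    rw [← sqrt_div' _ zero_le_two]; exact sqrt_le_sqrt (by linarith)
  have hlower : √(n * c) / 2 ≤ √k := by
    rw [show (2 : ℝ) = √4 by rw [show (4 : ℝ) = 2 ^ 2 by norm_num, sqrt_sq zero_le_two],
      ← sqrt_div' _ (by norm_num)]
    exact sqrt_le_sqrt (by linarith)
  have hnc : √(n * c) = √n * √c := sqrt_mul hn.le c
  calc √k / n + 2 / √k ≤ √(n * c) / √2 / n + 2 / (√(n * c) / 2) := by
        gcongr
    _ = √2 * (√c / (2 * √n) + 2 * √2 / √(n * c)) := by
        rw [hnc]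
        field_simp
        rw [sq_sqrt hn.le, sq_sqrt zero_le_two]
        ring

theorem ten_mul_exp_one_le_eleven_mul_sqrt_two_pi : 10 * exp 1 ≤ 11 * √(2 * π) := by
  have he : exp 1 < 2.7182818286 := exp_one_lt_d9
  have hπ : 3.14 < π := pi_gt_d2
  have hsq : (10 * exp 1 / 11) ^ 2 ≤ 2 * π := by nlinarith [exp_pos 1]
  have := le_sqrt_of_sq_le hsq
  linarith

theorem exp_one_sq_div_two_pi_mul_sqrt_two_le :
    exp 1 ^ 2 / (2 * π) * √2 ≤ 11 * exp 1 / (10 * √π) := by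
  have h2π : √(2 * π) * √(2 * π) = 2 * π := mul_self_sqrt (by positivity)
  rw [div_mul_eq_mul_div, div_le_div_iff₀ (by positivity) (by positivity)]
  calc exp 1 ^ 2 * √2 * (10 * √π) = exp 1 * √(2 * π) * (10 * exp 1) := by
        rw [sqrt_mul zero_le_two]; ring
    _ ≤ exp 1 * √(2 * π) * (11 * √(2 * π)) := by
        gcongr exp 1 * √(2 * π) * ?_
        exact ten_mul_exp_one_le_eleven_mul_sqrt_two_pi
    _ = 11 * exp 1 * (2 * π) := by linear_combination 11 * exp 1 * h2π

theorem stmt19_general (δ : ℝ) (hδ : δ < Real.pi) (n : ℕ)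
    (hn : 4 / (Real.pi - δ) ≤ (n : ℝ)) (k : ℕ)
    (hk : k = ⌊(n : ℝ) * (Real.pi - δ) / 2⌋₊) :
    (1 / Real.pi) * (1 / (n : ℝ) + 2 / (k : ℝ)) * 2 ^ (k - 1) * (Nat.factorial k : ℝ) /
        ((Real.pi - δ) ^ k * (n : ℝ) ^ k) ≤
      (11 * Real.exp 1 / (10 * Real.sqrt Real.pi)) *
        (Real.sqrt (Real.pi - δ) / (2 * Real.sqrt n) +
          2 * Real.sqrt 2 / Real.sqrt ((n : ℝ) * (Real.pi - δ))) *
        Real.exp (-(Real.pi - δ) * n / 2) := by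
  set c := π - δ
  have hc : 0 < c := sub_pos.mpr hδ
  have hnc : 4 ≤ n * c := by rwa [div_le_iff₀ hc] at hn
  have hn0 : (0 : ℝ) < n := by nlinarith
  have hkx : (k : ℝ) ≤ n * c / 2 := hk ▸ Nat.floor_le (by positivity)
  have hxk : n * c / 2 < k + 1 := hk ▸ Nat.lt_floor_add_one _
  have hk0 : (0 : ℝ) < k := by linarith
  have hA := two_pow_pred_mul_factorial_div_pow_le (x := c * n) (k := k)
    (by exact_mod_cast hk0.ne') (by linarith) (by linarith)
  have hB := sqrt_div_add_two_div_sqrt_le hn0 hc (k := k) (by linarith) hkx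
  calc 1 / π * (1 / n + 2 / k) * 2 ^ (k - 1) * (k ! : ℝ) / (c ^ k * n ^ k)
      = 1 / π * (1 / n + 2 / k) * (2 ^ (k - 1) * k ! / (c * n) ^ k) := by
        rw [mul_pow]; ring
    _ ≤ 1 / π * (1 / n + 2 / k) * (exp 1 ^ 2 / 2 * √k * exp (-(c * n) / 2)) := by gcongr
    _ = exp 1 ^ 2 / (2 * π) * (√k / n + 2 / √k) * exp (-c * n / 2) := by
        have hsk : √k * √k = k := mul_self_sqrt hk0.le
        have hs0 : 0 < √(k : ℝ) := sqrt_pos.mpr hk0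
        set s := √(k : ℝ)
        rw [neg_mul, ← hsk]
        field_simp
    _ ≤ exp 1 ^ 2 / (2 * π) * (√2 * (√c / (2 * √n) + 2 * √2 / √(n * c))) *
          exp (-c * n / 2) := by
        gcongr
    _ ≤ 11 * exp 1 / (10 * √π) * (√c / (2 * √n) + 2 * √2 / √(n * c)) *
          exp (-c * n / 2) := by
        rw [← mul_assoc]; gcongr; exact exp_one_sq_div_two_pi_mul_sqrt_two_le

theorem stmt19 (δ : ℝ) (hδ0 : 0 < δ) (hδ : δ < Real.pi) (n : ℕ)
    (hn : 4 / (Real.pi - δ) ≤ (n : ℝ)) (k : ℕ)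
    (hk : k = ⌊(n : ℝ) * (Real.pi - δ) / 2⌋₊) :
    (1 / Real.pi) * (1 / (n : ℝ) + 2 / (k : ℝ)) * 2 ^ (k - 1) * (Nat.factorial k : ℝ) /
        ((Real.pi - δ) ^ k * (n : ℝ) ^ k) ≤
      (11 * Real.exp 1 / (10 * Real.sqrt Real.pi)) *
        (Real.sqrt (Real.pi - δ) / (2 * Real.sqrt n) +
          2 * Real.sqrt 2 / Real.sqrt ((n : ℝ) * (Real.pi - δ))) *
        Real.exp (-(Real.pi - δ) * n / 2) :=
  stmt19_general δ hδ n hn k hk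
end
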